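/- Let D ≥ 1 be an integer and let χ : ℝ_+^D → ℝ be continuous on ℝ_+^D and twice continuously differentiable on (0,∞)^D. Then χ is ℝ_+^D-convex if and only if for every x ∈ (0,∞)^D, all entries of the Hessian matrix ∇²χ(x) are nonnegative. -/

import Mathlib

/-!
On the open orthant, `t ↦ χ (x + y + t • z) - χ (x + t • z)` is monotone: its derivative
`Dχ (x + y + t • z) z - Dχ (x + t • z) z` is nonnegative because `s ↦ Dχ (p + s • y) z` has
derivative `D²χ (p + s • y) y z = ∑ i j, y i * z j * ∂ᵢ∂ⱼχ ≥ 0`. Continuity carries the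
inequality to the closed orthant. Conversely, the second difference of `χ` with increments
`h • eᵢ` and `h • eⱼ` is `h² ∂ᵢ∂ⱼχ + o(h²)` as `h → 0⁺`, and it is nonnegative by orthant convexity.
-/

open MeasureTheory

/-- The nonnegative orthant `ℝ_+^D` in `ℝ^D`. -/
def orthant (D : ℕ) : Set (EuclideanSpace ℝ (Fin D)) := {x | ∀ i, 0 ≤ x i}

/-- The `(i,j)` entry of the Hessian matrix `∇²χ(x)`, as the second directional derivative
of `χ` at `x` in the coordinate directions `i` and `j`. -/
noncomputable def hessEntry (D : ℕ) (χ : EuclideanSpace ℝ (Fin D) → ℝ)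
    (x : EuclideanSpace ℝ (Fin D)) (i j : Fin D) : ℝ :=
  fderiv ℝ (fun z => fderiv ℝ χ z (EuclideanSpace.single j (1 : ℝ))) x
    (EuclideanSpace.single i (1 : ℝ))

open Set Filter Topology Asymptotics

section

variable {E F : Type*} [NormedAddCommGroup E] [NormedSpace ℝ E]
  [NormedAddCommGroup F] [NormedSpace ℝ F]

theorem fderiv_clm_apply_const_apply {c : E → E →L[ℝ] F} {p : E} (hc : DifferentiableAt ℝ c p)
    (v w : E) : fderiv ℝ (fun z => c z w) p v = fderiv ℝ c p v w := by
  rw [fderiv_clm_apply hc (differentiableAt_const w)]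
  simp

theorem Convex.le_apply_add_of_fderiv_nonneg {s : Set E} (hs : Convex ℝ s) {g : E → ℝ}
    (hg : ∀ p ∈ s, DifferentiableAt ℝ g p) {v : E} (hv : ∀ p ∈ s, 0 ≤ fderiv ℝ g p v)
    {p : E} (hp : p ∈ s) (hpv : p + v ∈ s) : g p ≤ g (p + v) := by
  have hseg : ∀ t ∈ Icc (0 : ℝ) 1, p + t • v ∈ s := fun t ht => by
    simpa [add_sub_cancel_left] using hs.add_smul_sub_mem hp hpv ht
  have hderiv : ∀ t ∈ Icc (0 : ℝ) 1,
      HasDerivAt (fun t : ℝ => g (p + t • v)) (fderiv ℝ g (p + t • v) v) t := fun t ht =>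
    (hg _ (hseg t ht)).hasFDerivAt.comp_hasDerivAt t
      (((hasDerivAt_id t).smul_const v).const_add p |>.congr_deriv (one_smul ℝ v))
  have hmono : MonotoneOn (fun t : ℝ => g (p + t • v)) (Icc 0 1) := by
    refine monotoneOn_of_deriv_nonneg (convex_Icc 0 1)
      (fun t ht => (hderiv t ht).continuousAt.continuousWithinAt)
      (fun t ht => ?_) (fun t ht => ?_) <;> rw [interior_Icc] at ht
    · exact (hderiv t (Ioo_subset_Icc_self ht)).differentiableAt.differentiableWithinAt
    · rw [(hderiv t (Ioo_subset_Icc_self ht)).deriv]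
      exact hv _ (hseg t (Ioo_subset_Icc_self ht))
  simpa using hmono (left_mem_Icc.2 zero_le_one) (right_mem_Icc.2 zero_le_one) zero_le_one

theorem nonneg_of_isLittleO_sub_sq_mul {g : ℝ → ℝ} {c : ℝ}
    (hg : (fun h => g h - h ^ 2 * c) =o[𝓝[>] 0] fun h => h ^ 2)
    (hpos : ∀ᶠ h in 𝓝[>] 0, 0 ≤ g h) : 0 ≤ c := by
  have hlim : Tendsto (fun h => g h / h ^ 2) (𝓝[>] 0) (𝓝 c) := by
    have := hg.tendsto_div_nhds_zero.const_add c
    rw [add_zero] at this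
    refine this.congr' ?_
    filter_upwards [self_mem_nhdsWithin] with h (hh : 0 < h)
    field_simp
    ring
  exact ge_of_tendsto hlim (hpos.mono fun h hh => by positivity)

end

def openOrthant (D : ℕ) : Set (EuclideanSpace ℝ (Fin D)) := {x | ∀ i, 0 < x i}

section

variable {D : ℕ}

theorem isOpen_openOrthant : IsOpen (openOrthant D) := by
  simp only [openOrthant, ofPred_forall]
  exact isOpen_iInter_of_finite fun i => isOpen_lt continuous_const (PiLp.continuous_apply 2 _ i)

theorem openOrthant_subset_orthant : openOrthant D ⊆ orthant D := fun _ hx i => (hx i).le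

theorem add_mem_openOrthant {x y : EuclideanSpace ℝ (Fin D)} (hx : x ∈ openOrthant D)
    (hy : y ∈ orthant D) : x + y ∈ openOrthant D := fun i => add_pos_of_pos_of_nonneg (hx i) (hy i)

theorem add_mem_orthant {x y : EuclideanSpace ℝ (Fin D)} (hx : x ∈ orthant D)
    (hy : y ∈ orthant D) : x + y ∈ orthant D := fun i => add_nonneg (hx i) (hy i)

theorem smul_mem_orthant {c : ℝ} (hc : 0 ≤ c) {x : EuclideanSpace ℝ (Fin D)}
    (hx : x ∈ orthant D) : c • x ∈ orthant D := fun i => mul_nonneg hc (hx i)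

theorem single_one_mem_orthant (i : Fin D) : EuclideanSpace.single i (1 : ℝ) ∈ orthant D :=
  fun j => by
    rw [PiLp.single_apply]
    split_ifs <;> norm_num

theorem convex_openOrthant : Convex ℝ (openOrthant D) :=
  fun _ hx _ hy _ _ ha hb hab i => convex_Ioi (0 : ℝ) (hx i) (hy i) ha hb hab

theorem orthant_subset_closure_openOrthant : orthant D ⊆ closure (openOrthant D) := by
  intro x hx
  let ones : EuclideanSpace ℝ (Fin D) := WithLp.toLp 2 fun _ => 1
  have hlim : Tendsto (fun ε : ℝ => x + ε • ones) (𝓝[>] 0) (𝓝 x) := by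
    have := ((continuous_const.add (continuous_id.smul continuous_const)).tendsto (0 : ℝ)
      (f := fun ε : ℝ => x + ε • ones))
    simpa using this.mono_left nhdsWithin_le_nhds
  refine mem_closure_of_tendsto hlim ?_
  filter_upwards [self_mem_nhdsWithin] with ε (hε : 0 < ε) i
  simpa [ones] using add_pos_of_nonneg_of_pos (hx i) hε


variable {χ : EuclideanSpace ℝ (Fin D) → ℝ}

theorem apply_apply_nonneg_of_mem_orthant
    (B : EuclideanSpace ℝ (Fin D) →L[ℝ] EuclideanSpace ℝ (Fin D) →L[ℝ] ℝ)
    (hB : ∀ i j, 0 ≤ B (EuclideanSpace.single i 1) (EuclideanSpace.single j 1))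
    {y z : EuclideanSpace ℝ (Fin D)} (hy : y ∈ orthant D) (hz : z ∈ orthant D) :
    0 ≤ B y z := by
  rw [← (EuclideanSpace.basisFun (Fin D) ℝ).sum_repr y,
    ← (EuclideanSpace.basisFun (Fin D) ℝ).sum_repr z]
  simp only [map_sum, map_smul, FunLike.coe_sum, FunLike.coe_smul,
    Finset.sum_apply, Pi.smul_apply, EuclideanSpace.basisFun_repr, EuclideanSpace.basisFun_apply,
    smul_eq_mul]
  exact Finset.sum_nonneg fun j _ =>
    mul_nonneg (hz j) (Finset.sum_nonneg fun i _ => mul_nonneg (hy i) (hB i j))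

theorem hessEntry_eq {x : EuclideanSpace ℝ (Fin D)}
    (hx : DifferentiableAt ℝ (fderiv ℝ χ) x) (i j : Fin D) :
    hessEntry D χ x i j =
      fderiv ℝ (fderiv ℝ χ) x (EuclideanSpace.single i 1) (EuclideanSpace.single j 1) :=
  fderiv_clm_apply_const_apply hx _ _

section openOrthant

variable (hC2 : ContDiffOn ℝ 2 χ (openOrthant D))
include hC2

theorem differentiableAt_of_mem_openOrthant {p : EuclideanSpace ℝ (Fin D)}
    (hp : p ∈ openOrthant D) : DifferentiableAt ℝ χ p :=
  (hC2.contDiffAt (isOpen_openOrthant.mem_nhds hp)).differentiableAt (by norm_num)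

theorem differentiableAt_fderiv_of_mem_openOrthant {p : EuclideanSpace ℝ (Fin D)}
    (hp : p ∈ openOrthant D) : DifferentiableAt ℝ (fderiv ℝ χ) p :=
  ((hC2.contDiffAt (isOpen_openOrthant.mem_nhds hp)).fderiv_right (m := 1) le_rfl)
    |>.differentiableAt one_ne_zero

variable (hH : ∀ p ∈ openOrthant D, ∀ i j, 0 ≤ hessEntry D χ p i j)
include hH

theorem fderiv_apply_le_fderiv_add_apply {p y z : EuclideanSpace ℝ (Fin D)}
    (hp : p ∈ openOrthant D) (hy : y ∈ orthant D) (hz : z ∈ orthant D) :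
    fderiv ℝ χ p z ≤ fderiv ℝ χ (p + y) z := by
  refine convex_openOrthant.le_apply_add_of_fderiv_nonneg (g := fun q => fderiv ℝ χ q z)
    (fun q hq => (differentiableAt_fderiv_of_mem_openOrthant hC2 hq).clm_apply
      (differentiableAt_const z)) (fun q hq => ?_) hp (add_mem_openOrthant hp hy)
  have hdiff := differentiableAt_fderiv_of_mem_openOrthant hC2 hq
  rw [fderiv_clm_apply_const_apply hdiff]
  exact apply_apply_nonneg_of_mem_orthant _ (fun i j => hessEntry_eq hdiff i j ▸ hH q hq i j) hy hz

theorem sub_le_sub_of_mem_openOrthant {x y z : EuclideanSpace ℝ (Fin D)}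
    (hx : x ∈ openOrthant D) (hy : y ∈ orthant D) (hz : z ∈ orthant D) :
    χ (x + y) - χ x ≤ χ (x + y + z) - χ (x + z) := by
  have hdiff : ∀ q ∈ openOrthant D, HasFDerivAt (fun q => χ (q + y) - χ q)
      (fderiv ℝ χ (q + y) - fderiv ℝ χ q) q := fun q hq =>
    ((hasFDerivAt_comp_add_right y).2
      (differentiableAt_of_mem_openOrthant hC2 (add_mem_openOrthant hq hy)).hasFDerivAt).sub
      (differentiableAt_of_mem_openOrthant hC2 hq).hasFDerivAt
  have := convex_openOrthant.le_apply_add_of_fderiv_nonneg (g := fun q => χ (q + y) - χ q)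
    (fun q hq => (hdiff q hq).differentiableAt) (v := z) (fun q hq => ?_) hx
    (add_mem_openOrthant hx hz)
  · rwa [add_right_comm] at this
  · rw [(hdiff q hq).fderiv, FunLike.coe_sub, Pi.sub_apply, sub_nonneg]
    exact fderiv_apply_le_fderiv_add_apply hC2 hH hq hy hz

end openOrthant

theorem sub_le_sub_of_hessEntry_nonneg (hcont : ContinuousOn χ (orthant D))
    (hC2 : ContDiffOn ℝ 2 χ (openOrthant D))
    (hH : ∀ p ∈ openOrthant D, ∀ i j, 0 ≤ hessEntry D χ p i j)
    {x y z : EuclideanSpace ℝ (Fin D)} (hx : x ∈ orthant D) (hy : y ∈ orthant D)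
    (hz : z ∈ orthant D) :
    χ (x + y) - χ x ≤ χ (x + y + z) - χ (x + z) := by
  have hshift : ∀ w ∈ orthant D, ContinuousOn (fun p => χ (p + w)) (orthant D) := fun w hw =>
    hcont.comp (continuousOn_id.add continuousOn_const) fun p hp => add_mem_orthant hp hw
  have hF : ContinuousWithinAt (fun p => χ (p + y + z) - χ (p + z) - (χ (p + y) - χ p))
      (openOrthant D) x := by
    refine ContinuousWithinAt.mono ?_ openOrthant_subset_orthant
    have hyz := hshift (y + z) (add_mem_orthant hy hz) x hx
    simp only [← add_assoc] at hyz
    exact ((hyz.sub (hshift z hz x hx)).sub ((hshift y hy x hx).sub (hcont x hx)))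
  have := hF.mem_closure (orthant_subset_closure_openOrthant hx) (t := Ici 0)
    fun p hp => sub_nonneg.2 (sub_le_sub_of_mem_openOrthant hC2 hH hp hy hz)
  rw [closure_Ici] at this
  linarith [mem_Ici.1 this]

theorem hessEntry_nonneg_of_sub_le_sub (hC2 : ContDiffOn ℝ 2 χ (openOrthant D))
    (hconv : ∀ x ∈ orthant D, ∀ y ∈ orthant D, ∀ z ∈ orthant D,
      χ (x + y) - χ x ≤ χ (x + y + z) - χ (x + z))
    {p : EuclideanSpace ℝ (Fin D)} (hp : p ∈ openOrthant D) (i j : Fin D) :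
    0 ≤ hessEntry D χ p i j := by
  set v : EuclideanSpace ℝ (Fin D) := EuclideanSpace.single i 1
  set w : EuclideanSpace ℝ (Fin D) := EuclideanSpace.single j 1
  have hv : v ∈ orthant D := single_one_mem_orthant i
  have hw : w ∈ orthant D := single_one_mem_orthant j
  have hint : ∀ q ∈ orthant D, p + q ∈ interior (openOrthant D) := fun q hq => by
    rw [isOpen_openOrthant.interior_eq]
    exact add_mem_openOrthant hp hq
  have hp' := differentiableAt_fderiv_of_mem_openOrthant hC2 hp
  have hsq := convex_openOrthant.isLittleO_alternate_sum_square
    (fun q hq => (differentiableAt_of_mem_openOrthant hC2 (interior_subset hq)).hasFDerivAt) hp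
    hp'.hasFDerivAt.hasFDerivWithinAt (hint _ (smul_mem_orthant (by norm_num) hv))
    (hint _ (smul_mem_orthant (by norm_num) hw))
  rw [hessEntry_eq hp']
  refine nonneg_of_isLittleO_sub_sq_mul (by simpa only [smul_eq_mul] using hsq) ?_
  filter_upwards [self_mem_nhdsWithin] with h (hh : 0 < h)
  -- Mathlib's alternating sum is the second difference based at `p + h • (v + w)`.
  have := hconv (p + h • (v + w)) (openOrthant_subset_orthant (add_mem_openOrthant hp
    (smul_mem_orthant hh.le (add_mem_orthant hv hw)))) (h • v) (smul_mem_orthant hh.le hv)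
    (h • w) (smul_mem_orthant hh.le hw)
  have e1 : p + h • (v + w) + h • v = p + h • (2 • v + w) := by module
  have e2 : p + h • (v + w) + h • v + h • w = p + h • (2 • v + 2 • w) := by module
  have e3 : p + h • (v + w) + h • w = p + h • (v + 2 • w) := by module
  rw [e2, e1, e3] at this
  linarith

end

theorem orthantConvex_iff_hessian_nonneg_general (D : ℕ)
    (χ : EuclideanSpace ℝ (Fin D) → ℝ)
    (hcont : ContinuousOn χ (orthant D))
    (hC2 : ContDiffOn ℝ 2 χ {x : EuclideanSpace ℝ (Fin D) | ∀ i, 0 < x i}) :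
    (∀ x ∈ orthant D, ∀ y ∈ orthant D, ∀ z ∈ orthant D,
        χ (x + y) - χ x ≤ χ (x + y + z) - χ (x + z)) ↔
      (∀ x : EuclideanSpace ℝ (Fin D), (∀ i, 0 < x i) →
        ∀ i j : Fin D, 0 ≤ hessEntry D χ x i j) :=
  ⟨fun hconv _ hx i j => hessEntry_nonneg_of_sub_le_sub hC2 hconv hx i j,
    fun hH _ hx _ hy _ hz => sub_le_sub_of_hessEntry_nonneg hcont hC2 hH hx hy hz⟩

/-- a function `χ : ℝ_+^D → ℝ`, continuous on `ℝ_+^D` and `C²` on `(0,∞)^D`,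
is `ℝ_+^D`-convex if and only if all entries of its Hessian are nonnegative on `(0,∞)^D`. -/
theorem orthantConvex_iff_hessian_nonneg (D : ℕ) (hD : 1 ≤ D)
    (χ : EuclideanSpace ℝ (Fin D) → ℝ)
    (hcont : ContinuousOn χ (orthant D))
    (hC2 : ContDiffOn ℝ 2 χ {x : EuclideanSpace ℝ (Fin D) | ∀ i, 0 < x i}) :
    (∀ x ∈ orthant D, ∀ y ∈ orthant D, ∀ z ∈ orthant D,
        χ (x + y) - χ x ≤ χ (x + y + z) - χ (x + z)) ↔
      (∀ x : EuclideanSpace ℝ (Fin D), (∀ i, 0 < x i) →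
        ∀ i j : Fin D, 0 ≤ hessEntry D χ x i j) :=
  orthantConvex_iff_hessian_nonneg_general D χ hcont hC2
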